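/- arXiv:2109.05239 — 7 statements merged into one kernel-verified Lean document; each statement's English description precedes it below -/
import Mathlib

section
/- If X is a reflexive Banach space and Y is a proper closed linear subspace of X, then there exists x in the unit sphere of X with dist(x, Y) = 1. -/
/-!
Separate a point outside `Y` from `Y` by a continuous functional `f` vanishing on `Y`; by
reflexivity `f` attains its norm at some `x` with `‖x‖ ≤ 1` (Hahn–Banach in the dual gives a
norming element of the bidual, which is the image of some `x`). Since `f` vanishes on `Y`,
`‖f‖ = f x ≤ ‖f‖ · dist(x, Y) ≤ ‖f‖ · ‖x‖ ≤ ‖f‖`, forcing `‖x‖ = dist(x, Y) = 1`.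
-/

open NormedSpace Metric

section

variable {𝕜 X : Type*} [RCLike 𝕜] [SeminormedAddCommGroup X] [NormedSpace 𝕜 X]

theorem exists_norm_le_one_apply_eq_norm_of_surjective_inclusionInDoubleDual
    (hrefl : Function.Surjective (inclusionInDoubleDual 𝕜 X)) (f : StrongDual 𝕜 X) :
    ∃ x : X, ‖x‖ ≤ 1 ∧ f x = ‖f‖ := by
  obtain ⟨Φ, hΦ, hΦf⟩ := exists_dual_vector'' 𝕜 f
  obtain ⟨x, rfl⟩ := hrefl Φ
  exact ⟨x, (inclusionInDoubleDualLi 𝕜).norm_map x ▸ hΦ, hΦf⟩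

theorem Submodule.exists_strongDual_ne_zero_eq_zero_of_notMem {Y : Submodule 𝕜 X}
    (hY : IsClosed (Y : Set X)) {x₀ : X} (hx₀ : x₀ ∉ Y) :
    ∃ f : StrongDual 𝕜 X, f x₀ ≠ 0 ∧ ∀ y ∈ Y, f y = 0 := by
  obtain ⟨g, -, hg⟩ := exists_dual_vector'' 𝕜 (Y.mkQL x₀)
  have hdist : ‖Y.mkQL x₀‖ = infDist x₀ Y :=
    QuotientAddGroup.norm_mk (S := Y.toAddSubgroup) x₀
  have hdist_ne : infDist x₀ Y ≠ 0 := fun h =>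
    hx₀ (hY.closure_subset ((mem_closure_iff_infDist_zero ⟨0, Y.zero_mem⟩).2 h))
  refine ⟨g.comp Y.mkQL, ?_, fun y hy => ?_⟩
  · rw [ContinuousLinearMap.comp_apply, hg, hdist]
    exact_mod_cast hdist_ne
  · simp [(Submodule.Quotient.mk_eq_zero Y).2 hy]

theorem ContinuousLinearMap.norm_apply_le_mul_infDist (f : StrongDual 𝕜 X) {s : Set X}
    (hs : s.Nonempty) (hf : ∀ y ∈ s, f y = 0) (x : X) :
    ‖f x‖ ≤ ‖f‖ * infDist x s := by
  rcases (norm_nonneg f).eq_or_lt with hf0 | hfpos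
  · simpa [← hf0] using f.le_opNorm x
  rw [← div_le_iff₀' hfpos, le_infDist hs]
  intro y hy
  rw [div_le_iff₀' hfpos, dist_eq_norm]
  calc ‖f x‖ = ‖f (x - y)‖ := by rw [map_sub, hf y hy, sub_zero]
    _ ≤ ‖f‖ * ‖x - y‖ := f.le_opNorm _

end

theorem riesz_lemma_reflexive_general {X : Type*} [NormedAddCommGroup X] [NormedSpace ℝ X]
    (hrefl : Function.Surjective (inclusionInDoubleDual ℝ X))
    (Y : Subspace ℝ X) (hYc : IsClosed (Y : Set X)) (hY : ∃ x : X, x ∉ Y) :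
    ∃ x : X, ‖x‖ = 1 ∧ Metric.infDist x (Y : Set X) = 1 := by
  obtain ⟨x₀, hx₀⟩ := hY
  obtain ⟨f, hfx₀, hfY⟩ := Y.exists_strongDual_ne_zero_eq_zero_of_notMem hYc hx₀
  have hf : 0 < ‖f‖ := norm_pos_iff.2 fun h => hfx₀ (by simp [h])
  obtain ⟨x, hx, hfx⟩ :=
    exists_norm_le_one_apply_eq_norm_of_surjective_inclusionInDoubleDual hrefl f
  have hdist_ge : 1 ≤ infDist x Y := le_of_mul_le_mul_left
    (by simpa [hfx] using f.norm_apply_le_mul_infDist ⟨0, Y.zero_mem⟩ hfY x) hf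
  have hdist_le : infDist x Y ≤ ‖x‖ := by
    simpa using infDist_le_dist_of_mem (x := x) Y.zero_mem
  exact ⟨x, by linarith, by linarith⟩

/-- If `X` is a reflexive Banach space and `Y` is a proper closed linear subspace of `X`,
then there exists `x` in the unit sphere of `X` with `dist (x, Y) = 1`. -/
theorem riesz_lemma_reflexive {X : Type*} [NormedAddCommGroup X] [NormedSpace ℝ X]
    [CompleteSpace X]
    (hrefl : Function.Surjective (inclusionInDoubleDual ℝ X))
    (Y : Subspace ℝ X) (hYc : IsClosed (Y : Set X)) (hY : ∃ x : X, x ∉ Y) :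
    ∃ x : X, ‖x‖ = 1 ∧ Metric.infDist x (Y : Set X) = 1 :=
  riesz_lemma_reflexive_general hrefl Y hYc hY
end

section
/- Let X be a Banach ideal space on a σ-finite measure space and J an order ideal of X (a closed solid linear subspace). Then for every f ∈ X, dist(f, J) = inf{ ‖f - g‖_X : g ∈ J, |g| ≤ |f| }. -/
open Filter Topology MeasureTheory Set

/-- A **Banach ideal space** on a measure space `(α, μ)`: a collection of (real-valued)
measurable functions with a complete lattice-compatible norm satisfying the ideal property. -/
structure BanachIdealSpace (α : Type*) [MeasurableSpace α] (μ : Measure α) where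
  Mem : (α → ℝ) → Prop
  N : (α → ℝ) → ℝ
  mem_zero : Mem 0
  mem_add : ∀ f g, Mem f → Mem g → Mem (f + g)
  mem_smul : ∀ (c : ℝ) f, Mem f → Mem (c • f)
  measurable : ∀ f, Mem f → AEMeasurable f μ
  N_nonneg : ∀ f, 0 ≤ N f
  N_zero : N 0 = 0
  N_eq_zero : ∀ f, Mem f → N f = 0 → (∀ᵐ x ∂μ, f x = 0)
  N_add : ∀ f g, Mem f → Mem g → N (f + g) ≤ N f + N g
  N_smul : ∀ (c : ℝ) f, N (c • f) = |c| * N f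
  ideal : ∀ f g, AEMeasurable f μ → (∀ᵐ x ∂μ, |f x| ≤ |g x|) → Mem g →
    Mem f ∧ N f ≤ N g
  complete : ∀ u : ℕ → (α → ℝ), (∀ n, Mem (u n)) →
    (∀ ε : ℝ, 0 < ε → ∃ n₀ : ℕ, ∀ m n, n₀ ≤ m → n₀ ≤ n → N (u m - u n) < ε) →
    ∃ f, Mem f ∧ Tendsto (fun n => N (u n - f)) atTop (𝓝 0)

namespace BanachIdealSpace

variable {α : Type*} [MeasurableSpace α] {μ : Measure α}

/-- Distance (w.r.t. a norm functional `N`) from `f` to a set `S` of functions. -/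
noncomputable def distIn (N : (α → ℝ) → ℝ) (f : α → ℝ) (S : Set (α → ℝ)) : ℝ :=
  sInf ((fun g => N (f - g)) '' S)

/-- The set of **order continuous elements** of a (generalized) function space given by a
membership predicate `Mem` and a norm `N`: those `f` such that every sequence `uₙ` with
`0 ≤ uₙ ≤ |f|` a.e., a.e. non-increasing and converging to `0` a.e., satisfies `N (uₙ) → 0`. -/
def ocSet (μ : Measure α) (Mem : (α → ℝ) → Prop) (N : (α → ℝ) → ℝ) : Set (α → ℝ) :=
  {f | Mem f ∧ ∀ u : ℕ → (α → ℝ), (∀ n, Mem (u n)) →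
    (∀ n, ∀ᵐ x ∂μ, 0 ≤ u n x ∧ u n x ≤ |f x|) →
    (∀ n, ∀ᵐ x ∂μ, u (n + 1) x ≤ u n x) →
    (∀ᵐ x ∂μ, Tendsto (fun n => u n x) atTop (𝓝 0)) →
    Tendsto (fun n => N (u n)) atTop (𝓝 0)}

/-- The ideal `X_a` of order continuous elements of a Banach ideal space `X`. -/
def oc (X : BanachIdealSpace α μ) : Set (α → ℝ) := ocSet μ X.Mem X.N

/-- An **order ideal** of a Banach ideal space: a closed solid linear subspace. -/
structure IsOrderIdeal (X : BanachIdealSpace α μ) (J : Set (α → ℝ)) : Prop where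
  subset : ∀ f ∈ J, X.Mem f
  zero : (0 : α → ℝ) ∈ J
  add : ∀ f g, f ∈ J → g ∈ J → f + g ∈ J
  smul : ∀ (c : ℝ) f, f ∈ J → c • f ∈ J
  solid : ∀ f g, f ∈ J → X.Mem g → (∀ᵐ x ∂μ, |g x| ≤ |f x|) → g ∈ J
  closed : ∀ (u : ℕ → (α → ℝ)) f, (∀ n, u n ∈ J) → X.Mem f →
    Tendsto (fun n => X.N (f - u n)) atTop (𝓝 0) → f ∈ J

/-- The **Fatou property** of a Banach ideal space. -/
def Fatou (X : BanachIdealSpace α μ) : Prop :=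
  ∀ (u : ℕ → (α → ℝ)) (f : α → ℝ), (∀ n, X.Mem (u n)) → AEMeasurable f μ →
    (∀ᵐ x ∂μ, 0 ≤ u 0 x) → (∀ᵐ x ∂μ, Monotone fun n => u n x) →
    (∀ᵐ x ∂μ, Tendsto (fun n => u n x) atTop (𝓝 (f x))) →
    BddAbove (Set.range fun n => X.N (u n)) →
    X.Mem f ∧ Tendsto (fun n => X.N (u n)) atTop (𝓝 (X.N f))

/-- The **semi-Fatou property**: if `0 ≤ uₙ ↑ f ∈ X` then `‖uₙ‖ ↑ ‖f‖`. -/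
def SemiFatou (X : BanachIdealSpace α μ) : Prop :=
  ∀ (u : ℕ → (α → ℝ)) (f : α → ℝ), (∀ n, X.Mem (u n)) → X.Mem f →
    (∀ᵐ x ∂μ, 0 ≤ u 0 x) → (∀ᵐ x ∂μ, Monotone fun n => u n x) →
    (∀ᵐ x ∂μ, Tendsto (fun n => u n x) atTop (𝓝 (f x))) →
    Tendsto (fun n => X.N (u n)) atTop (𝓝 (X.N f))

/-- A Banach ideal space is **rearrangement invariant (symmetric)**: equimeasurable
functions belong to the space simultaneously and have equal norms. -/
def Symmetric (X : BanachIdealSpace α μ) : Prop :=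
  ∀ f g, AEMeasurable f μ →
    (∀ lam : ℝ, 0 < lam → μ {x | lam < |f x|} = μ {x | lam < |g x|}) →
    X.Mem g → X.Mem f ∧ X.N f = X.N g

/-- The **non-increasing rearrangement** of a function `f` (w.r.t. the measure `μ`). -/
noncomputable def rear (μ : Measure α) (f : α → ℝ) (t : ℝ) : ℝ :=
  sInf {lam : ℝ | 0 < lam ∧ μ {x | lam < |f x|} ≤ ENNReal.ofReal t}

/-- A (generalized) function space given by `(Mem, N)` contains a **lattice isometric copy
of `ℓ∞`**: there is a linear map from bounded sequences which preserves absolute values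
(hence the lattice operations) and is an isometry for the sup norm on bounded sequences. -/
def HasLatticeCopyLinf (Mem : (α → ℝ) → Prop) (N : (α → ℝ) → ℝ) : Prop :=
  ∃ T : (ℕ → ℝ) → (α → ℝ),
    (∀ x y, T (x + y) = T x + T y) ∧
    (∀ (c : ℝ) x, T (c • x) = c • T x) ∧
    (∀ x, T (fun n => |x n|) = fun t => |T x t|) ∧
    (∀ x : ℕ → ℝ, BddAbove (Set.range fun n => |x n|) →
      Mem (T x) ∧ N (T x) = ⨆ n, |x n|)

end BanachIdealSpace

/-!
Clamping `g ∈ J` pointwise into `[-|f|, |f|]` gives `h` with `|h| ≤ |g|` (so `h ∈ J` by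
solidity) and `|h| ≤ |f|`. Clamping is `1`-Lipschitz and fixes `f`, so `|f - h| ≤ |f - g|`,
whence `‖f - h‖ ≤ ‖f - g‖` by the ideal property: restricting the infimum to such `h` loses
nothing.
-/

section Clamp

variable {G : Type*} [AddCommGroup G] [LinearOrder G] [IsOrderedAddMonoid G]

theorem abs_max_neg_min_sub_max_neg_min_le (r x y : G) :
    |max (-r) (min x r) - max (-r) (min y r)| ≤ |x - y| := by
  rw [max_comm (-r), max_comm (-r)]
  refine (abs_max_sub_max_le_abs _ _ _).trans ?_
  simpa using abs_min_sub_min_le_max x r y r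

theorem max_neg_min_eq_self {r x : G} (h : |x| ≤ r) : max (-r) (min x r) = x := by
  rw [abs_le] at h
  rw [min_eq_left h.2, max_eq_right h.1]

theorem abs_max_neg_min_le {r : G} (hr : 0 ≤ r) (x : G) : |max (-r) (min x r)| ≤ r :=
  abs_le.2 ⟨le_max_left _ _, max_le (neg_le_self hr) (min_le_right _ _)⟩

theorem abs_max_neg_min_le_abs {r : G} (hr : 0 ≤ r) (x : G) : |max (-r) (min x r)| ≤ |x| := by
  simpa [max_neg_min_eq_self (abs_zero.trans_le hr)] using
    abs_max_neg_min_sub_max_neg_min_le r x 0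

theorem abs_sub_max_neg_min_le {r y : G} (hy : |y| ≤ r) (x : G) :
    |y - max (-r) (min x r)| ≤ |y - x| := by
  simpa [max_neg_min_eq_self hy] using abs_max_neg_min_sub_max_neg_min_le r y x

end Clamp

def clampByAbs {α : Type*} (f g : α → ℝ) : α → ℝ :=
  fun x => max (-|f x|) (min (g x) |f x|)

theorem abs_clampByAbs_le {α : Type*} (f g : α → ℝ) (x : α) : |clampByAbs f g x| ≤ |f x| :=
  abs_max_neg_min_le (abs_nonneg (f x)) (g x)

namespace BanachIdealSpace

variable {α : Type*} [MeasurableSpace α] {μ : Measure α} (X : BanachIdealSpace α μ)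
  {f g : α → ℝ}

theorem mem_sub (hf : X.Mem f) (hg : X.Mem g) : X.Mem (f - g) := by
  simpa [sub_eq_add_neg] using X.mem_add f ((-1 : ℝ) • g) hf (X.mem_smul (-1) g hg)

theorem aemeasurable_clampByAbs (hf : X.Mem f) (hg : X.Mem g) :
    AEMeasurable (clampByAbs f g) μ :=
  have hfm := (X.measurable f hf).abs
  hfm.neg.max ((X.measurable g hg).min hfm)

theorem N_sub_clampByAbs_le (hf : X.Mem f) (hg : X.Mem g) :
    X.N (f - clampByAbs f g) ≤ X.N (f - g) :=
  (X.ideal _ _ ((X.measurable f hf).sub (X.aemeasurable_clampByAbs hf hg))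
    (.of_forall fun x => abs_sub_max_neg_min_le le_rfl (g x)) (X.mem_sub hf hg)).2

theorem IsOrderIdeal.clampByAbs_mem {X : BanachIdealSpace α μ} {J : Set (α → ℝ)}
    (hJ : X.IsOrderIdeal J) (hf : X.Mem f) (hg : g ∈ J) : clampByAbs f g ∈ J :=
  hJ.solid g _ hg
    (X.ideal _ _ (X.aemeasurable_clampByAbs hf (hJ.subset g hg))
      (.of_forall (abs_clampByAbs_le f g)) hf).1
    (.of_forall fun x => abs_max_neg_min_le_abs (abs_nonneg (f x)) (g x))

end BanachIdealSpace

open BanachIdealSpace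

theorem dist_to_order_ideal_eq_inf_dominated_general {α : Type*} [MeasurableSpace α]
    {μ : Measure α} (X : BanachIdealSpace α μ) (J : Set (α → ℝ))
    (hJ : X.IsOrderIdeal J) (f : α → ℝ) (hf : X.Mem f) :
    distIn X.N f J =
      sInf ((fun g => X.N (f - g)) '' {g ∈ J | ∀ᵐ x ∂μ, |g x| ≤ |f x|}) := by
  refine csInf_eq_csInf_of_forall_exists_le ?_ ?_
  · rintro _ ⟨g, hg, rfl⟩
    have hdom : ∀ᵐ x ∂μ, |clampByAbs f g x| ≤ |f x| := .of_forall (abs_clampByAbs_le f g)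
    exact ⟨_, ⟨clampByAbs f g, ⟨hJ.clampByAbs_mem hf hg, hdom⟩, rfl⟩,
      X.N_sub_clampByAbs_le hf (hJ.subset g hg)⟩
  · rintro _ ⟨g, hg, rfl⟩
    exact ⟨_, ⟨g, hg.1, rfl⟩, le_rfl⟩

/-- Let `X` be a Banach ideal space on a σ-finite measure space and `J` an order ideal of
`X`. Then for every `f ∈ X`,
`dist (f, J) = inf { ‖f - g‖_X : g ∈ J, |g| ≤ |f| a.e. }`. -/
theorem dist_to_order_ideal_eq_inf_dominated {α : Type*} [MeasurableSpace α]
    {μ : Measure α} [SigmaFinite μ] (X : BanachIdealSpace α μ) (J : Set (α → ℝ))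
    (hJ : X.IsOrderIdeal J) (f : α → ℝ) (hf : X.Mem f) :
    distIn X.N f J =
      sInf ((fun g => X.N (f - g)) '' {g ∈ J | ∀ᵐ x ∂μ, |g x| ≤ |f x|}) :=
  dist_to_order_ideal_eq_inf_dominated_general X J hJ f hf
end

section
/- Let X be a Banach ideal space on a σ-finite measure space and J an order ideal of X. If 0 ≤ g ≤ f with f ∈ X, then dist(g, J) ≤ dist(f, J). -/
open Filter Topology MeasureTheory Set

open BanachIdealSpace

/-- Let `X` be a Banach ideal space on a σ-finite measure space and `J` an order ideal of
`X`. If `0 ≤ g ≤ f` with `f ∈ X`, then `dist (g, J) ≤ dist (f, J)`. -/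
theorem dist_to_order_ideal_mono {α : Type*} [MeasurableSpace α]
    {μ : Measure α} [SigmaFinite μ] (X : BanachIdealSpace α μ) (J : Set (α → ℝ))
    (hJ : X.IsOrderIdeal J) (f g : α → ℝ) (hf : X.Mem f) (hg : X.Mem g)
    (h0g : ∀ᵐ x ∂μ, 0 ≤ g x) (hgf : ∀ᵐ x ∂μ, g x ≤ f x) :
    distIn X.N g J ≤ distIn X.N f J := by
  refine le_csInf ⟨X.N (f - 0), 0, hJ.zero, rfl⟩ ?_
  rintro y ⟨k, hkJ, rfl⟩
  set k' : α → ℝ := fun x => max 0 (min (k x) (g x)) with hk'def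
  have hkmem := hJ.subset k hkJ
  have hkm := X.measurable k hkmem
  have hgm := X.measurable g hg
  have hk'm : AEMeasurable k' μ := aemeasurable_const.max (hkm.min hgm)
  have habs : ∀ᵐ x ∂μ, |k' x| ≤ |k x| := by
    filter_upwards [h0g] with x hx
    simp only [hk'def]
    rcases le_or_gt (k x) 0 with h | h
    · rw [max_eq_left (le_trans (min_le_left _ _) h)]
      simp [abs_nonneg]
    · rw [abs_of_nonneg (le_max_left _ _), abs_of_pos h]
      exact max_le h.le (min_le_left _ _)
  have hk'X := X.ideal k' k hk'm habs hkmem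
  have hk'J := hJ.solid k k' hkJ hk'X.1 habs
  have hle : ∀ᵐ x ∂μ, |(g - k') x| ≤ |(f - k) x| := by
    filter_upwards [h0g, hgf] with x hx0 hxg
    simp only [Pi.sub_apply, hk'def]
    rcases le_or_gt (k x) 0 with h | h
    · rw [max_eq_left (le_trans (min_le_left _ _) h), sub_zero,
        abs_of_nonneg hx0, abs_of_nonneg (by linarith)]
      linarith
    · rcases le_or_gt (k x) (g x) with h2 | h2
      · rw [min_eq_left h2, max_eq_right h.le, abs_of_nonneg (by linarith),
          abs_of_nonneg (by linarith)]
        linarith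
      · rw [min_eq_right h2.le, max_eq_right hx0, sub_self, abs_zero]
        exact abs_nonneg _
  have hmemfk : X.Mem (f - k) := by
    have := X.mem_add f ((-1 : ℝ) • k) hf (X.mem_smul (-1) k hkmem)
    simpa [sub_eq_add_neg] using this
  have hmain := X.ideal (g - k') (f - k) (hgm.sub hk'm) hle hmemfk
  have hbdd : BddBelow ((fun h => X.N (g - h)) '' J) := by
    refine ⟨0, ?_⟩
    rintro z ⟨m, hm, rfl⟩
    exact X.N_nonneg _
  calc sInf ((fun h => X.N (g - h)) '' J) ≤ X.N (g - k') :=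
        csInf_le hbdd ⟨k', hk'J, rfl⟩
    _ ≤ X.N (f - k) := hmain.2
end

section
/- Let X be a Banach ideal space on a σ-finite measure space and J an order ideal of X. Then for every f ∈ X, dist(f, J) = dist(|f|, J). -/
open Filter Topology MeasureTheory Set

open BanachIdealSpace

private lemma measurable_realSign : Measurable Real.sign := by
  unfold Real.sign
  exact Measurable.ite (measurableSet_lt measurable_id measurable_const) measurable_const
    (Measurable.ite (measurableSet_lt measurable_const measurable_id) measurable_const
      measurable_const)

private lemma abs_realSign_le_one (a : ℝ) : |Real.sign a| ≤ 1 := by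
  rcases Real.sign_apply_eq a with h | h | h <;> rw [h] <;> norm_num

private lemma key1 (a b : ℝ) : |(|a|) - Real.sign a * b| ≤ |a - b| := by
  rcases lt_trichotomy a 0 with h | h | h
  · rw [Real.sign_of_neg h, abs_of_neg h]
    have : -a - -1 * b = -(a - b) := by ring
    rw [this, abs_neg]
  · subst h
    simp
  · rw [Real.sign_of_pos h, abs_of_pos h, one_mul]

private lemma key2 (a b : ℝ) : |a - Real.sign a * b| ≤ |(|a|) - b| := by
  rcases lt_trichotomy a 0 with h | h | h
  · rw [Real.sign_of_neg h, abs_of_neg h]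
    have : a - -1 * b = -(-a - b) := by ring
    rw [this, abs_neg]
  · subst h
    simp
  · rw [Real.sign_of_pos h, abs_of_pos h, one_mul]

/-- Let `X` be a Banach ideal space on a σ-finite measure space and `J` an order ideal of
`X`. Then for every `f ∈ X`, `dist (f, J) = dist (|f|, J)`. -/
theorem dist_to_order_ideal_abs {α : Type*} [MeasurableSpace α]
    {μ : Measure α} [SigmaFinite μ] (X : BanachIdealSpace α μ) (J : Set (α → ℝ))
    (hJ : X.IsOrderIdeal J) (f : α → ℝ) (hf : X.Mem f) :
    distIn X.N f J = distIn X.N (fun x => |f x|) J := by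
  have hfm : AEMeasurable f μ := X.measurable f hf
  have habs : X.Mem fun x => |f x| := by
    refine (X.ideal (fun x => |f x|) f (hfm.norm.congr (by filter_upwards with x using (Real.norm_eq_abs _))) ?_ hf).1
    filter_upwards with x using by simp [abs_abs]
  -- main step
  have step : ∀ h₁ h₂ : α → ℝ, X.Mem h₁ → X.Mem h₂ →
      (∀ x b, |h₁ x - Real.sign (f x) * b| ≤ |h₂ x - b|) →
      distIn X.N h₁ J ≤ distIn X.N h₂ J := by
    intro h₁ h₂ hm₁ hm₂ hkey
    unfold distIn
    have hbdd : BddBelow ((fun g => X.N (h₁ - g)) '' J) := by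
      refine ⟨0, fun y hy => ?_⟩
      rcases hy with ⟨g, _, rfl⟩
      exact X.N_nonneg _
    refine le_csInf ⟨_, mem_image_of_mem _ hJ.zero⟩ ?_
    rintro y ⟨g, hg, rfl⟩
    set g' : α → ℝ := fun x => Real.sign (f x) * g x with hg'def
    have hgm : AEMeasurable g μ := X.measurable g (hJ.subset g hg)
    have hg'm : AEMeasurable g' μ :=
      (measurable_realSign.comp_aemeasurable hfm).mul hgm
    have hg'mem : X.Mem g' := by
      refine (X.ideal g' g hg'm ?_ (hJ.subset g hg)).1
      filter_upwards with x
      rw [hg'def, abs_mul]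
      calc |Real.sign (f x)| * |g x| ≤ 1 * |g x| :=
            mul_le_mul_of_nonneg_right (abs_realSign_le_one _) (abs_nonneg _)
        _ = |g x| := one_mul _
    have hg'J : g' ∈ J := by
      refine hJ.solid g g' hg hg'mem ?_
      filter_upwards with x
      rw [hg'def, abs_mul]
      calc |Real.sign (f x)| * |g x| ≤ 1 * |g x| :=
            mul_le_mul_of_nonneg_right (abs_realSign_le_one _) (abs_nonneg _)
        _ = |g x| := one_mul _
    have hmemdiff : X.Mem (h₂ - g) := by
      have := X.mem_add h₂ ((-1 : ℝ) • g) hm₂ (X.mem_smul (-1) g (hJ.subset g hg))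
      have heq : h₂ + (-1 : ℝ) • g = h₂ - g := by
        funext x; simp [sub_eq_add_neg]
      rwa [heq] at this
    have hNle : X.N (h₁ - g') ≤ X.N (h₂ - g) := by
      refine (X.ideal (h₁ - g') (h₂ - g) ?_ ?_ hmemdiff).2
      · exact (X.measurable h₁ hm₁).sub hg'm
      · filter_upwards with x
        simpa using hkey x (g x)
    calc sInf ((fun g => X.N (h₁ - g)) '' J) ≤ X.N (h₁ - g') :=
          csInf_le hbdd (mem_image_of_mem _ hg'J)
      _ ≤ X.N (h₂ - g) := hNle
  refine le_antisymm ?_ ?_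
  · exact step f (fun x => |f x|) hf habs fun x b => key2 (f x) b
  · exact step (fun x => |f x|) f habs hf fun x b => key1 (f x) b
end

section
/- Let X be a rearrangement invariant function space on (0,∞). If L∞ embeds continuously into X, then X contains a lattice isometric copy of ℓ∞. -/
open Filter Topology MeasureTheory Set

open BanachIdealSpace

/-!
Put `c = ‖1‖_X > 0` and split `(0,∞)` into sets `A₀, A₁, …` of infinite measure, e.g.
`Aₙ = {t | (unpair ⌊t⌋₊).1 = n}`, a union of infinitely many unit intervals. Then
`T x = c⁻¹ ∑ₙ xₙ χ_{Aₙ}` is linear and lattice preserving. Since `|T x| ≤ c⁻¹ sup |xₙ|`,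
`‖T x‖ ≤ sup |xₙ|`; conversely, `|T x| ≥ c⁻¹ |xₙ| χ_{Aₙ}`, and because `Aₙ` has infinite
measure this function is equimeasurable with the constant `c⁻¹ |xₙ|`, whose norm is `|xₙ|`.
-/

theorem volume_natFloor_preimage_inter_Ioi_eq_top {S : Set ℕ} (hS : S.Infinite) :
    volume ((fun t : ℝ => ⌊t⌋₊) ⁻¹' S ∩ Ioi 0) = ⊤ := by
  set e := hS.natEmbedding S
  have hsub : (⋃ k, Ioo ((e k : ℕ) : ℝ) (e k + 1)) ⊆ (fun t : ℝ => ⌊t⌋₊) ⁻¹' S ∩ Ioi 0 := by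
    simp only [iUnion_subset_iff]
    intro k t ht
    have hfloor : ⌊t⌋₊ = e k :=
      (Nat.floor_eq_iff ((Nat.cast_nonneg _).trans ht.1.le)).2 ⟨ht.1.le, ht.2⟩
    exact ⟨by simp [hfloor], lt_of_le_of_lt (Nat.cast_nonneg _) ht.1⟩
  have hdisj : Pairwise (Function.onFun Disjoint fun k => Ioo ((e k : ℕ) : ℝ) (e k + 1)) := by
    intro i j hij
    refine disjoint_left.2 fun t hi hj => hij (e.injective (Subtype.ext ?_))
    have h0 : (0 : ℝ) ≤ t := le_trans (Nat.cast_nonneg _) hi.1.le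
    rw [← (Nat.floor_eq_iff h0).2 ⟨hi.1.le, hi.2⟩, (Nat.floor_eq_iff h0).2 ⟨hj.1.le, hj.2⟩]
  refine measure_mono_top hsub ?_
  simp [measure_iUnion hdisj (fun _ => measurableSet_Ioo)]

theorem volume_unpair_fst_natFloor_preimage_inter_Ioi_eq_top (n : ℕ) :
    volume ((fun t : ℝ => (Nat.unpair ⌊t⌋₊).1) ⁻¹' {n} ∩ Ioi 0) = ⊤ :=
  volume_natFloor_preimage_inter_Ioi_eq_top (S := {m | (Nat.unpair m).1 = n}) <|
    infinite_of_injective_forall_mem (f := Nat.pair n) (fun _ _ h => (Nat.pair_eq_pair.1 h).2)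
      fun b => by simp [Nat.unpair_pair]

namespace BanachIdealSpace

variable {α : Type*} [MeasurableSpace α] {μ : Measure α} (X : BanachIdealSpace α μ)

theorem N_one_pos [NeZero μ] (h1 : X.Mem fun _ => 1) : 0 < X.N fun _ => 1 := by
  refine (X.N_nonneg _).lt_of_ne fun h => ?_
  have := ae_neBot.2 (NeZero.ne μ)
  obtain ⟨_, h⟩ := (X.N_eq_zero _ h1 h.symm).exists
  exact one_ne_zero h

theorem Symmetric.N_indicator_const (hX : X.Symmetric) (h1 : X.Mem fun _ => 1) {s : Set α}
    (hs : MeasurableSet s) (hμs : μ s = μ univ) (a : ℝ) :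
    X.Mem (s.indicator fun _ => a) ∧ X.N (s.indicator fun _ => a) = |a| * X.N fun _ => 1 := by
  have hdist : ∀ r : ℝ, 0 < r →
      μ {x | r < |s.indicator (fun _ => a) x|} = μ {x | r < |(a • fun _ : α => (1 : ℝ)) x|} := by
    intro r hr
    by_cases hra : r < |a|
    · have hlevel : {x | r < |s.indicator (fun _ => a) x|} = s := by
        ext x
        by_cases hx : x ∈ s <;> simp [hx, hra, hr.le]
      simp [hlevel, hra, hμs]
    · have hlevel : {x | r < |s.indicator (fun _ => a) x|} = ∅ := by
        ext x
        by_cases hx : x ∈ s <;> simp [hx, hra, hr.le]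
      simp [hlevel, hra]
  obtain ⟨hmem, hN⟩ := hX _ _ ((measurable_const.indicator hs).aemeasurable) hdist
    (X.mem_smul a _ h1)
  exact ⟨hmem, hN.trans (X.N_smul a _)⟩

variable {X}

theorem Symmetric.N_comp_eq (hX : X.Symmetric) (h1 : X.Mem fun _ => 1) {φ : α → ℕ}
    (hφ : Measurable φ) (hfib : ∀ n, μ (φ ⁻¹' {n}) = μ univ) {x : ℕ → ℝ}
    (hx : BddAbove (range fun n => |x n|)) :
    X.Mem (x ∘ φ) ∧ X.N (x ∘ φ) = X.N (fun _ => 1) * ⨆ n, |x n| := by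
  set s := ⨆ n, |x n|
  have hs : 0 ≤ s := Real.iSup_nonneg fun n => abs_nonneg _
  have hmeas : AEMeasurable (x ∘ φ) μ := (measurable_from_top.comp hφ).aemeasurable
  have hupper : ∀ᵐ t ∂μ, |(x ∘ φ) t| ≤ |(s • fun _ : α => (1 : ℝ)) t| :=
    ae_of_all _ fun t => by simpa [abs_of_nonneg hs] using le_ciSup hx (φ t)
  obtain ⟨hmem, hle⟩ := X.ideal _ _ hmeas hupper (X.mem_smul s _ h1)
  refine ⟨hmem, le_antisymm ?_ ?_⟩
  · rw [X.N_smul, abs_of_nonneg hs, mul_comm] at hle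
    exact hle
  · rw [Real.mul_iSup_of_nonneg (X.N_nonneg _)]
    refine ciSup_le fun n => ?_
    obtain ⟨hmemₙ, hNₙ⟩ := hX.N_indicator_const X h1 (hφ (measurableSet_singleton n)) (hfib n) (x n)
    have hlower : ∀ᵐ t ∂μ, |(φ ⁻¹' {n}).indicator (fun _ => x n) t| ≤ |(x ∘ φ) t| :=
      ae_of_all _ fun t => by
        by_cases ht : φ t = n <;> simp [Set.indicator, ht]
    rw [mul_comm, ← hNₙ]
    exact (X.ideal _ _ (X.measurable _ hmemₙ) hlower hmem).2

theorem Symmetric.hasLatticeCopyLinf [NeZero μ] (hX : X.Symmetric) (h1 : X.Mem fun _ => 1)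
    {φ : α → ℕ} (hφ : Measurable φ) (hfib : ∀ n, μ (φ ⁻¹' {n}) = μ univ) :
    HasLatticeCopyLinf X.Mem X.N := by
  set c := X.N fun _ => 1
  have hc : 0 < c := X.N_one_pos h1
  refine ⟨fun x => c⁻¹ • (x ∘ φ), fun x y => ?_, fun a x => ?_, fun x => ?_, fun x hx => ?_⟩
  · funext t
    simp [mul_add]
  · funext t
    simp only [Pi.smul_apply, Function.comp_apply, smul_eq_mul]
    ring
  · funext t
    simp [abs_mul, abs_of_pos hc]
  · obtain ⟨hmem, hN⟩ := hX.N_comp_eq h1 hφ hfib hx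
    refine ⟨X.mem_smul _ _ hmem, ?_⟩
    rw [X.N_smul, hN, abs_of_pos (inv_pos.2 hc), inv_mul_cancel_left₀ hc.ne']

end BanachIdealSpace

/-- Let `X` be a rearrangement invariant function space on `(0,∞)`. If `L∞` embeds
continuously into `X` (equivalently `χ_{(0,∞)} ∈ X`), then `X` contains a lattice
isometric copy of `ℓ∞`. -/
theorem ri_space_with_Linf_contains_linf
    (X : BanachIdealSpace ℝ (volume.restrict (Set.Ioi (0 : ℝ))))
    (hsymm : X.Symmetric) (hLinf : X.Mem (fun _ => 1)) :
    HasLatticeCopyLinf X.Mem X.N := by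
  have : NeZero (volume.restrict (Ioi (0 : ℝ))) := ⟨by simp [Measure.restrict_eq_zero]⟩
  refine hsymm.hasLatticeCopyLinf hLinf (φ := fun t => (Nat.unpair ⌊t⌋₊).1)
    (by fun_prop) fun n => ?_
  rw [Measure.restrict_apply' measurableSet_Ioi, Measure.restrict_apply_univ, Real.volume_Ioi,
    volume_unpair_fst_natFloor_preimage_inter_Ioi_eq_top]
end

section
/- Let φ be an increasing concave function on (0,∞) with φ(0+) = 0. The Lorentz space Λ_φ contains a lattice isometric copy of ℓ∞ if and only if φ(∞) := lim_{t→∞} φ(t) < ∞. -/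
open Filter Topology MeasureTheory Set

open BanachIdealSpace
open scoped ENNReal NNReal

/-- The Lorentz functional `‖f‖_{Λ_φ} = ∫₀^∞ f*(t) φ'(t) dt` (as an extended real). -/
noncomputable def lorentzNormE (phi : ℝ → ℝ) (f : ℝ → ℝ) : ℝ≥0∞ :=
  ∫⁻ t in Set.Ioi (0 : ℝ),
    ENNReal.ofReal (rear (volume.restrict (Set.Ioi (0 : ℝ))) f t * deriv phi t)

/-- Membership in the Lorentz space `Λ_φ`. -/
def lorentzMem (phi : ℝ → ℝ) (f : ℝ → ℝ) : Prop :=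
  AEMeasurable f (volume.restrict (Set.Ioi (0 : ℝ))) ∧ lorentzNormE phi f < ⊤

/-- The Lorentz norm of `Λ_φ`. -/
noncomputable def lorentzNorm (phi : ℝ → ℝ) (f : ℝ → ℝ) : ℝ :=
  (lorentzNormE phi f).toReal

/-!
If `φ(∞) < ∞`, then `∫₀^∞ φ' = φ(∞)` is finite and positive. A function equal to `|x n|` on
pairwise disjoint sets of infinite measure has constant rearrangement `sup |x n|`, so spreading a
bounded sequence over such sets and dividing by `∫₀^∞ φ'` is a lattice isometry `ℓ∞ → Λ_φ`.

If `φ(∞) = ∞`, then every `f` with `0 < ‖f‖ < ∞` has level sets `{|f| > λ}` of finite measure: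
otherwise `f* ≥ λ` on a half-line, where `φ'` has infinite integral. For a lattice isometry `T`,
the images `T eₖ` of the unit vectors are disjoint, of norm one and dominated by `T 1`.
Disjointness makes the measures of `{T eₖ > ε}` summable, hence `(T eₖ)* → 0` pointwise, and
dominated convergence gives `‖T eₖ‖ → 0`, a contradiction.
-/

local notation "μ₀" => volume.restrict (Set.Ioi (0 : ℝ))

lemma MonotoneOn.deriv_nonneg_of_isOpen {f : ℝ → ℝ} {s : Set ℝ} {x : ℝ} (hf : MonotoneOn f s)
    (hs : IsOpen s) (hx : x ∈ s) : 0 ≤ deriv f x := by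
  rw [← derivWithin_of_isOpen hs hx]
  exact hf.derivWithin_nonneg

lemma MonotoneOn.nonneg_of_tendsto_nhdsGT {f : ℝ → ℝ} (hf : MonotoneOn f (Ioi 0))
    (h0 : Tendsto f (𝓝[>] 0) (𝓝 0)) {t : ℝ} (ht : 0 < t) : 0 ≤ f t :=
  le_of_tendsto h0 (mem_of_superset (Ioo_mem_nhdsGT ht) fun _ hu => hf hu.1 ht hu.2.le)

/-- A locally Lipschitz function is absolutely continuous on compact intervals, where the
fundamental theorem of calculus holds. -/
lemma MonotoneOn.lintegral_Ioc_deriv_eq {f : ℝ → ℝ} {s : Set ℝ} {a b : ℝ}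
    (hmono : MonotoneOn f s) (hlip : LocallyLipschitzOn s f) (hs : IsOpen s) (hab : a ≤ b)
    (hsub : Icc a b ⊆ s) :
    ∫⁻ t in Ioc a b, ENNReal.ofReal (deriv f t) = ENNReal.ofReal (f b - f a) := by
  obtain ⟨K, hK⟩ := (hlip.mono (uIcc_of_le hab ▸ hsub)).exists_lipschitzOnWith_of_compact
    isCompact_uIcc
  have hac := hK.absolutelyContinuousOnInterval
  rw [← hac.integral_deriv_eq_sub, intervalIntegral.integral_of_le hab,
    ofReal_integral_eq_lintegral_ofReal]
  · exact (intervalIntegrable_iff_integrableOn_Ioc_of_le hab).mp hac.intervalIntegrable_deriv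
  · filter_upwards [ae_restrict_mem measurableSet_Ioc] with t ht
    exact hmono.deriv_nonneg_of_isOpen hs (hsub (Ioc_subset_Icc_self ht))

lemma monotone_Ioc_one_div_succ : Monotone fun n : ℕ => Ioc (1 / ((n : ℝ) + 1)) (n + 1) :=
  fun m n hmn => by
    have : (m : ℝ) ≤ n := by exact_mod_cast hmn
    exact Ioc_subset_Ioc (one_div_le_one_div_of_le (by positivity) (by linarith)) (by linarith)

lemma iUnion_Ioc_one_div_succ : ⋃ n : ℕ, Ioc (1 / ((n : ℝ) + 1)) (n + 1) = Ioi 0 := by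
  refine Subset.antisymm
    (iUnion_subset fun n t ht => (by positivity : (0 : ℝ) < 1 / (n + 1)).trans ht.1)
    fun t (ht : 0 < t) => ?_
  obtain ⟨m, hm⟩ := exists_nat_one_div_lt ht
  obtain ⟨k, hk⟩ := exists_nat_ge t
  have hm' : (m : ℝ) ≤ max m k := by exact_mod_cast le_max_left m k
  have hk' : (k : ℝ) ≤ max m k := by exact_mod_cast le_max_right m k
  exact mem_iUnion.2 ⟨max m k,
    (one_div_le_one_div_of_le (by positivity) (by linarith)).trans_lt hm, by linarith⟩

section Concave

variable {phi : ℝ → ℝ}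

lemma ConcaveOn.lintegral_Ioc_deriv_eq (hconc : ConcaveOn ℝ (Ioi 0) phi)
    (hmono : MonotoneOn phi (Ioi 0)) {a b : ℝ} (ha : 0 < a) (hab : a ≤ b) :
    ∫⁻ t in Ioc a b, ENNReal.ofReal (deriv phi t) = ENNReal.ofReal (phi b - phi a) :=
  hmono.lintegral_Ioc_deriv_eq (hconc.locallyLipschitzOn isOpen_Ioi) isOpen_Ioi hab
    fun _ ht => ha.trans_le ht.1

lemma ConcaveOn.lintegral_Ioi_deriv_eq_top (hconc : ConcaveOn ℝ (Ioi 0) phi)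
    (hmono : MonotoneOn phi (Ioi 0)) (hub : ¬BddAbove (phi '' Ioi 0)) {c : ℝ} (hc : 0 < c) :
    ∫⁻ t in Ioi c, ENNReal.ofReal (deriv phi t) = ⊤ := by
  refine ENNReal.eq_top_of_forall_nnreal_le fun r => ?_
  obtain ⟨_, ⟨b, hb, rfl⟩, hrb⟩ := not_bddAbove_iff.mp hub (r + phi c)
  have hcb : c ≤ b := by
    by_contra! hbc
    linarith [hmono hb hc hbc.le, r.2]
  calc (r : ℝ≥0∞) = ENNReal.ofReal r := ENNReal.ofReal_coe_nnreal.symm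
    _ ≤ ENNReal.ofReal (phi b - phi c) := ENNReal.ofReal_le_ofReal (by linarith)
    _ = ∫⁻ t in Ioc c b, ENNReal.ofReal (deriv phi t) :=
      (hconc.lintegral_Ioc_deriv_eq hmono hc hcb).symm
    _ ≤ _ := lintegral_mono_set Ioc_subset_Ioi_self

lemma ConcaveOn.lintegral_Ioi_zero_deriv_lt_top (hconc : ConcaveOn ℝ (Ioi 0) phi)
    (hmono : MonotoneOn phi (Ioi 0)) (h0 : Tendsto phi (𝓝[>] 0) (𝓝 0))
    (hbdd : BddAbove (phi '' Ioi 0)) :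
    ∫⁻ t in Ioi 0, ENNReal.ofReal (deriv phi t) < ⊤ := by
  obtain ⟨M, hM⟩ := hbdd
  have hpiece : ∀ n : ℕ, ∫⁻ t in Ioc (1 / ((n : ℝ) + 1)) (n + 1), ENNReal.ofReal (deriv phi t) ≤
      ENNReal.ofReal M := fun n => by
    have ha : (0 : ℝ) < 1 / (n + 1) := by positivity
    have hab : 1 / ((n : ℝ) + 1) ≤ n + 1 := by
      rw [div_le_iff₀ (by positivity)]; nlinarith [(n.cast_nonneg : (0 : ℝ) ≤ n)]
    rw [hconc.lintegral_Ioc_deriv_eq hmono ha hab]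
    exact ENNReal.ofReal_le_ofReal (by
      linarith [hM (mem_image_of_mem phi (show (0 : ℝ) < n + 1 by positivity)),
        hmono.nonneg_of_tendsto_nhdsGT h0 ha])
  rw [← iUnion_Ioc_one_div_succ, setLIntegral_iUnion_of_directed _
    monotone_Ioc_one_div_succ.directed_le]
  exact (iSup_le hpiece).trans_lt ENNReal.ofReal_lt_top

end Concave

namespace BanachIdealSpace

variable {α : Type*} [MeasurableSpace α] {μ : Measure α} {f g : α → ℝ} {t lam : ℝ}

lemma rear_nonneg : 0 ≤ rear μ f t :=
  Real.sInf_nonneg fun _ h => h.1.le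

lemma rear_le (hlam : 0 < lam) (h : μ {x | lam < |f x|} ≤ ENNReal.ofReal t) :
    rear μ f t ≤ lam :=
  csInf_le ⟨0, fun _ h => h.1.le⟩ ⟨hlam, h⟩

lemma rear_mono (hgf : ∀ x, |g x| ≤ |f x|)
    (hf : ∃ lam, 0 < lam ∧ μ {x | lam < |f x|} ≤ ENNReal.ofReal t) :
    rear μ g t ≤ rear μ f t :=
  csInf_le_csInf ⟨0, fun _ h => h.1.le⟩ hf fun _ ⟨hlam, h⟩ =>
    ⟨hlam, (measure_mono fun x hx => lt_of_lt_of_le hx (hgf x)).trans h⟩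

lemma rear_antitoneOn (hf : ∀ t, 0 < t → ∃ lam, 0 < lam ∧ μ {x | lam < |f x|} ≤ ENNReal.ofReal t) :
    AntitoneOn (rear μ f) (Ioi 0) := fun t₁ ht₁ _ _ h₁₂ =>
  csInf_le_csInf ⟨0, fun _ h => h.1.le⟩ (hf t₁ ht₁) fun _ ⟨hlam, h⟩ =>
    ⟨hlam, h.trans (ENNReal.ofReal_le_ofReal h₁₂)⟩

lemma le_rear_of_measure_eq_top (htop : μ {x | lam < |f x|} = ⊤)
    (hf : ∃ lam, 0 < lam ∧ μ {x | lam < |f x|} ≤ ENNReal.ofReal t) : lam ≤ rear μ f t := by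
  refine le_csInf hf fun b ⟨_, hb⟩ => ?_
  by_contra! hblam
  have : μ {x | lam < |f x|} ≤ μ {x | b < |f x|} := measure_mono fun x hx => hblam.trans hx
  exact ENNReal.ofReal_ne_top (top_unique (htop ▸ this.trans hb))

/-- With no admissible level the rearrangement takes the junk value `sInf ∅ = 0`. -/
lemma rear_eq_zero (h : ∀ lam, 0 < lam → ENNReal.ofReal t < μ {x | lam < |f x|}) :
    rear μ f t = 0 := by
  have hadm : {lam | 0 < lam ∧ μ {x | lam < |f x|} ≤ ENNReal.ofReal t} = ∅ :=
    eq_empty_of_forall_notMem fun lam hlam => (h lam hlam.1).not_ge hlam.2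
  rw [rear, hadm, Real.sInf_empty]

lemma rear_eq_of_measure_eq_top {S : ℝ} (hS : 0 ≤ S) (hle : ∀ x, |f x| ≤ S)
    (htop : ∀ lam < S, μ {x | lam < |f x|} = ⊤) : rear μ f t = S := by
  have hadm : {lam | 0 < lam ∧ μ {x | lam < |f x|} ≤ ENNReal.ofReal t} =
      {lam | 0 < lam ∧ S ≤ lam} := by
    ext lam
    refine ⟨fun ⟨hlam, h⟩ => ⟨hlam, not_lt.1 fun hlt => ?_⟩, fun ⟨hlam, hSlam⟩ => ⟨hlam, ?_⟩⟩
    · exact ENNReal.ofReal_ne_top (top_unique (htop lam hlt ▸ h))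
    · have hempty : {x | lam < |f x|} = ∅ :=
        eq_empty_of_forall_notMem fun x hx => (hle x).not_gt (hSlam.trans_lt hx)
      simp [hempty]
  have hbdd : BddBelow {lam | 0 < lam ∧ S ≤ lam} := ⟨0, fun _ h => h.1.le⟩
  rw [rear, hadm]
  refine le_antisymm (le_of_forall_pos_lt_add fun ε hε => ?_)
    (le_csInf ⟨S + 1, by linarith, by linarith⟩ fun _ h => h.2)
  have hmem : S + ε / 2 ∈ {lam | 0 < lam ∧ S ≤ lam} := ⟨by linarith, by linarith⟩
  exact (csInf_le hbdd hmem).trans_lt (by linarith)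

lemma exists_measure_lt_abs_le (hf : AEMeasurable f μ)
    (hfin : ∀ lam, 0 < lam → μ {x | lam < |f x|} < ⊤) (ht : 0 < t) :
    ∃ lam, 0 < lam ∧ μ {x | lam < |f x|} ≤ ENNReal.ofReal t := by
  have hlim : Tendsto (fun n : ℕ => μ {x | (n : ℝ) + 1 < |f x|}) atTop (𝓝 0) := by
    have hanti : Antitone fun n : ℕ => {x | (n : ℝ) + 1 < |f x|} := fun m n hmn x hx => by
      have : (m : ℝ) ≤ n := by exact_mod_cast hmn
      exact lt_of_le_of_lt (by linarith : (m : ℝ) + 1 ≤ n + 1) hx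
    have hempty : ⋂ n : ℕ, {x | (n : ℝ) + 1 < |f x|} = ∅ := by
      refine eq_empty_of_forall_notMem fun x hx => ?_
      obtain ⟨n, hn⟩ := exists_nat_gt |f x|
      have hxn : (n : ℝ) + 1 < |f x| := mem_iInter.1 hx n
      linarith
    have h := tendsto_measure_iInter_atTop (s := fun n : ℕ => {x | (n : ℝ) + 1 < |f x|})
      (fun _ => hf.abs.nullMeasurable measurableSet_Ioi) hanti ⟨0, (hfin _ (by norm_num)).ne⟩
    rwa [hempty, measure_empty] at h
  obtain ⟨n, hn⟩ := (hlim.eventually_lt_const (ENNReal.ofReal_pos.2 ht)).exists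
  exact ⟨n + 1, by positivity, hn.le⟩

/-- The level sets of disjointly supported functions below `|f|` are disjoint and lie in those
of `f`, so their measures are summable. -/
lemma tendsto_rear_zero_of_disjoint {g : ℕ → α → ℝ} (hg : ∀ k, AEMeasurable (g k) μ)
    (hdisj : Pairwise fun j k => ∀ x, g j x = 0 ∨ g k x = 0) (hgf : ∀ k x, |g k x| ≤ |f x|)
    (hfin : ∀ lam, 0 < lam → μ {x | lam < |f x|} < ⊤) (ht : 0 < t) :
    Tendsto (fun k => rear μ (g k) t) atTop (𝓝 0) := by
  refine tendsto_order.2 ⟨fun a ha => Eventually.of_forall fun _ => ha.trans_le rear_nonneg,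
    fun ε hε => ?_⟩
  have hε2 : 0 < ε / 2 := half_pos hε
  have hsum : ∑' k, μ {x | ε / 2 < |g k x|} ≠ ⊤ := by
    refine ((tsum_meas_le_meas_iUnion_of_disjoint₀ μ
      (fun k => (hg k).abs.nullMeasurable measurableSet_Ioi) fun j k hjk => ?_).trans
      (measure_mono (iUnion_subset fun k x hx => hx.trans_le (hgf k x)))).trans_lt
      (hfin _ hε2) |>.ne
    refine Disjoint.aedisjoint
      (disjoint_left.2 fun x (hj : ε / 2 < |g j x|) (hk : ε / 2 < |g k x|) => ?_)
    rcases hdisj hjk x with h | h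
    · rw [h, abs_zero] at hj; linarith
    · rw [h, abs_zero] at hk; linarith
  filter_upwards [(ENNReal.tendsto_atTop_zero_of_tsum_ne_top hsum).eventually_lt_const
    (ENNReal.ofReal_pos.2 ht)] with k hk
  exact (rear_le hε2 hk.le).trans_lt (half_lt_self hε)

end BanachIdealSpace

section LatticeMap

variable {ι β : Type*} {T : (ι → ℝ) → (β → ℝ)}

lemma map_nonneg_of_map_abs (habs : ∀ x, T (fun n => |x n|) = fun t => |T x t|) {x : ι → ℝ}
    (hx : 0 ≤ x) (t : β) : 0 ≤ T x t := by
  have h := congrFun (habs x) t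
  rw [show (fun n => |x n|) = x from funext fun n => abs_of_nonneg (hx n)] at h
  exact h ▸ abs_nonneg _

lemma map_sub_of_map_add (hadd : ∀ x y, T (x + y) = T x + T y) (x y : ι → ℝ) :
    T (x - y) = T x - T y := by
  rw [eq_sub_iff_add_eq, ← hadd, sub_add_cancel]

lemma map_mono_of_map_abs (hadd : ∀ x y, T (x + y) = T x + T y)
    (habs : ∀ x, T (fun n => |x n|) = fun t => |T x t|) {x y : ι → ℝ} (hxy : x ≤ y) :
    T x ≤ T y := fun t => by
  have h := map_nonneg_of_map_abs habs (sub_nonneg.2 hxy) t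
  rw [map_sub_of_map_add hadd, Pi.sub_apply] at h
  linarith

/-- For `x, y ≥ 0` with disjoint supports, `|x - y| = x + y`; applying `T` gives
`T x + T y = |T x - T y|`, which forces one of `T x t`, `T y t` to vanish. -/
lemma map_eq_zero_or_eq_zero_of_map_abs (hadd : ∀ x y, T (x + y) = T x + T y)
    (habs : ∀ x, T (fun n => |x n|) = fun t => |T x t|) {x y : ι → ℝ} (hx : 0 ≤ x) (hy : 0 ≤ y)
    (hxy : ∀ n, x n = 0 ∨ y n = 0) (t : β) : T x t = 0 ∨ T y t = 0 := by
  have habs_sub : (fun n => |(x - y) n|) = x + y := funext fun n => by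
    rcases hxy n with h | h <;> simp [h, abs_of_nonneg (hx n), abs_of_nonneg (hy n)]
  have h := congrFun (habs (x - y)) t
  rw [habs_sub, hadd, map_sub_of_map_add hadd, Pi.add_apply, Pi.sub_apply] at h
  have hx' := map_nonneg_of_map_abs habs hx t
  have hy' := map_nonneg_of_map_abs habs hy t
  rcases abs_cases (T x t - T y t) with ⟨h', _⟩ | ⟨h', _⟩
  · right; linarith
  · left; linarith

end LatticeMap

section Lorentz

variable {phi : ℝ → ℝ}

lemma measure_lt_abs_lt_top_of_lorentzNormE (hconc : ConcaveOn ℝ (Ioi 0) phi)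
    (hmono : MonotoneOn phi (Ioi 0)) (hub : ¬BddAbove (phi '' Ioi 0)) {f : ℝ → ℝ}
    (hfin : lorentzNormE phi f ≠ ⊤) (hf0 : lorentzNormE phi f ≠ 0) {lam : ℝ} (hlam : 0 < lam) :
    μ₀ {x | lam < |f x|} < ⊤ := by
  by_contra! htop
  rw [top_le_iff] at htop
  by_cases hadm : ∃ t₁, 0 < t₁ ∧ ∃ lam', 0 < lam' ∧ μ₀ {x | lam' < |f x|} ≤ ENNReal.ofReal t₁
  · obtain ⟨t₁, ht₁, lam', hlam', hle⟩ := hadm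
    refine hfin (eq_top_iff.2 ?_)
    calc ⊤ = ENNReal.ofReal lam * ∫⁻ t in Ioi t₁, ENNReal.ofReal (deriv phi t) := by
          rw [hconc.lintegral_Ioi_deriv_eq_top hmono hub ht₁,
            ENNReal.mul_top (ENNReal.ofReal_pos.2 hlam).ne']
      _ = ∫⁻ t in Ioi t₁, ENNReal.ofReal (lam * deriv phi t) := by
          rw [← lintegral_const_mul' _ _ ENNReal.ofReal_ne_top]
          simp_rw [ENNReal.ofReal_mul hlam.le]
      _ ≤ ∫⁻ t in Ioi t₁, ENNReal.ofReal (rear μ₀ f t * deriv phi t) := by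
          refine setLIntegral_mono' measurableSet_Ioi fun t (ht : t₁ < t) =>
            ENNReal.ofReal_le_ofReal (mul_le_mul_of_nonneg_right ?_
              (hmono.deriv_nonneg_of_isOpen isOpen_Ioi (ht₁.trans ht)))
          exact le_rear_of_measure_eq_top htop
            ⟨lam', hlam', hle.trans (ENNReal.ofReal_le_ofReal ht.le)⟩
      _ ≤ lorentzNormE phi f := lintegral_mono_set (Ioi_subset_Ioi ht₁.le)
  · push Not at hadm
    refine hf0 ((setLIntegral_congr_fun measurableSet_Ioi fun t ht => ?_).trans lintegral_zero)
    rw [rear_eq_zero (hadm t ht), zero_mul, ENNReal.ofReal_zero]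

lemma tendsto_lorentzNormE_zero (hmono : MonotoneOn phi (Ioi 0)) {f : ℝ → ℝ} {g : ℕ → ℝ → ℝ}
    (hf : lorentzNormE phi f ≠ ⊤)
    (hfadm : ∀ t, 0 < t → ∃ lam, 0 < lam ∧ μ₀ {x | lam < |f x|} ≤ ENNReal.ofReal t)
    (hgf : ∀ k x, |g k x| ≤ |f x|)
    (hg : ∀ t, 0 < t → Tendsto (fun k => rear μ₀ (g k) t) atTop (𝓝 0)) :
    Tendsto (fun k => lorentzNormE phi (g k)) atTop (𝓝 0) := by
  have hgadm : ∀ k t, 0 < t → ∃ lam, 0 < lam ∧ μ₀ {x | lam < |g k x|} ≤ ENNReal.ofReal t :=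
    fun k t ht => (hfadm t ht).imp fun _ ⟨hlam, h⟩ =>
      ⟨hlam, (measure_mono fun x hx => hx.trans_le (hgf k x)).trans h⟩
  have h := tendsto_lintegral_of_dominated_convergence' (μ := μ₀) (f := fun _ => 0)
    (fun t => ENNReal.ofReal (rear μ₀ f t * deriv phi t))
    (fun k => ENNReal.measurable_ofReal.comp_aemeasurable
      ((aemeasurable_restrict_of_antitoneOn measurableSet_Ioi (rear_antitoneOn (hgadm k))).mul
        (measurable_deriv phi).aemeasurable))
    (fun k => (ae_restrict_mem measurableSet_Ioi).mono fun t ht =>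
      ENNReal.ofReal_le_ofReal (mul_le_mul_of_nonneg_right (rear_mono (hgf k) (hfadm t ht))
        (hmono.deriv_nonneg_of_isOpen isOpen_Ioi ht)))
    hf
    ((ae_restrict_mem measurableSet_Ioi).mono fun t ht => by
      simpa using ENNReal.tendsto_ofReal ((hg t ht).mul_const (deriv phi t)))
  rwa [lintegral_zero] at h

lemma bddAbove_of_hasLatticeCopyLinf (hconc : ConcaveOn ℝ (Ioi 0) phi)
    (hmono : MonotoneOn phi (Ioi 0))
    (hcopy : HasLatticeCopyLinf (lorentzMem phi) (lorentzNorm phi)) :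
    BddAbove (phi '' Ioi 0) := by
  by_contra hub
  obtain ⟨T, hadd, -, habs, hiso⟩ := hcopy
  have hunit : ∀ x : ℕ → ℝ, 0 ≤ x → x ≤ 1 → (∃ k, x k = 1) →
      lorentzMem phi (T x) ∧ lorentzNormE phi (T x) = 1 := by
    rintro x hx0 hx1 ⟨k, hk⟩
    have hle : ∀ n, |x n| ≤ 1 := fun n => (abs_of_nonneg (hx0 n)).trans_le (hx1 n)
    have hbdd : BddAbove (range fun n => |x n|) := ⟨1, forall_mem_range.2 hle⟩
    have hsup : ⨆ n, |x n| = 1 :=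
      le_antisymm (ciSup_le hle) (by simpa [hk] using le_ciSup hbdd k)
    obtain ⟨hmem, hnorm⟩ := hiso x hbdd
    exact ⟨hmem, (ENNReal.toReal_eq_one_iff _).1 (hnorm.trans hsup)⟩
  set e : ℕ → ℕ → ℝ := fun k => Pi.single k 1
  have he0 : ∀ k, 0 ≤ e k := fun k => Pi.single_nonneg.2 zero_le_one
  have he1 : ∀ k, e k ≤ 1 := fun k n => by
    by_cases h : n = k <;> simp [e, h]
  obtain ⟨hfmem, hf⟩ := hunit 1 zero_le_one le_rfl ⟨0, rfl⟩
  have hu : ∀ k, lorentzMem phi (T (e k)) ∧ lorentzNormE phi (T (e k)) = 1 := fun k =>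
    hunit (e k) (he0 k) (he1 k) ⟨k, by simp [e]⟩
  have hfin : ∀ lam, 0 < lam → μ₀ {x | lam < |T 1 x|} < ⊤ := fun _ =>
    measure_lt_abs_lt_top_of_lorentzNormE hconc hmono hub (hf ▸ ENNReal.one_ne_top)
      (hf ▸ one_ne_zero)
  have hle : ∀ k x, |T (e k) x| ≤ |T 1 x| := fun k x => by
    rw [abs_of_nonneg (map_nonneg_of_map_abs habs (he0 k) x),
      abs_of_nonneg (map_nonneg_of_map_abs habs zero_le_one x)]
    exact map_mono_of_map_abs hadd habs (he1 k) x
  have hdisj : Pairwise fun j k => ∀ x, T (e j) x = 0 ∨ T (e k) x = 0 := fun j k hjk =>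
    map_eq_zero_or_eq_zero_of_map_abs hadd habs (he0 j) (he0 k) fun n => by
      by_cases h : n = j <;> simp [e, Pi.single_apply, h, hjk]
  have hlim := tendsto_lorentzNormE_zero hmono (hf ▸ ENNReal.one_ne_top)
    (fun _ => exists_measure_lt_abs_le hfmem.1 hfin) hle
    fun _ ht => tendsto_rear_zero_of_disjoint (fun k => (hu k).1.1) hdisj hle hfin ht
  simp only [fun k => (hu k).2] at hlim
  exact one_ne_zero (tendsto_nhds_unique tendsto_const_nhds hlim)

end Lorentz

lemma volume_restrict_Ioi_natFloor_preimage_eq_top {S : Set ℕ} (hS : S.Infinite) :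
    μ₀ (Nat.floor ⁻¹' S) = ⊤ := by
  have : Infinite S := hS.to_subtype
  have hunit : ∀ n : ℕ, 1 ≤ μ₀ (Ico (n : ℝ) (n + 1)) := fun n => by
    rw [Measure.restrict_apply measurableSet_Ico]
    calc (1 : ℝ≥0∞) = volume (Ioo (n : ℝ) (n + 1)) := by simp [Real.volume_Ioo]
      _ ≤ _ := measure_mono fun t ht =>
        mem_inter (Ioo_subset_Ico_self ht) ((Nat.cast_nonneg n).trans_lt ht.1)
  have hdisj : Pairwise (Function.onFun Disjoint fun n : S => Ico (n : ℝ) (n + 1)) :=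
    fun i j hij => disjoint_left.2 fun t hi hj =>
      hij (Subtype.ext ((Nat.floor_eq_on_Ico _ t hi).symm.trans (Nat.floor_eq_on_Ico _ t hj)))
  refine top_unique ?_
  calc ⊤ = ∑' _ : S, (1 : ℝ≥0∞) := (ENNReal.tsum_const_eq_top_of_ne_zero one_ne_zero).symm
    _ ≤ ∑' n : S, μ₀ (Ico (n : ℝ) (n + 1)) := ENNReal.tsum_le_tsum fun n => hunit n
    _ ≤ μ₀ (⋃ n : S, Ico (n : ℝ) (n + 1)) :=
      tsum_meas_le_meas_iUnion_of_disjoint _ (fun _ => measurableSet_Ico) hdisj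
    _ ≤ μ₀ (Nat.floor ⁻¹' S) := measure_mono (iUnion_subset fun n t ht => by
      simp [Nat.floor_eq_on_Ico _ t ht])

lemma volume_restrict_Ioi_unpair_fst_eq_top (n : ℕ) :
    μ₀ {t : ℝ | (Nat.unpair ⌊t⌋₊).1 = n} = ⊤ :=
  volume_restrict_Ioi_natFloor_preimage_eq_top (S := {m | (Nat.unpair m).1 = n}) <|
    (infinite_range_of_injective (f := Nat.pair n) fun _ _ h => (Nat.pair_eq_pair.1 h).2).mono
      (range_subset_iff.2 fun k => by simp)

/-- The lattice embedding of `ℓ∞` into `Λ_φ`: `x n` is spread over the set, of infinite measure,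
where the first `Nat.unpair` coordinate of `⌊t⌋₊` is `n`. -/
noncomputable def spreadSeq (c : ℝ) (x : ℕ → ℝ) (t : ℝ) : ℝ :=
  x (Nat.unpair ⌊t⌋₊).1 * c

lemma measurable_spreadSeq (c : ℝ) (x : ℕ → ℝ) : Measurable (spreadSeq c x) :=
  (measurable_from_nat (f := fun m => x (Nat.unpair m).1 * c)).comp Nat.measurable_floor

lemma rear_spreadSeq {x : ℕ → ℝ} (hx : BddAbove (range fun n => |x n|)) {c : ℝ} (hc : 0 < c)
    (t : ℝ) : rear μ₀ (spreadSeq c x) t = (⨆ n, |x n|) * c := by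
  have habs : ∀ s, |spreadSeq c x s| = |x (Nat.unpair ⌊s⌋₊).1| * c := fun s => by
    rw [spreadSeq, abs_mul, abs_of_pos hc]
  refine rear_eq_of_measure_eq_top (mul_nonneg (Real.iSup_nonneg fun n => abs_nonneg _) hc.le)
    (fun s => habs s ▸ mul_le_mul_of_nonneg_right (le_ciSup hx _) hc.le) fun lam hlam => ?_
  obtain ⟨n, hn⟩ := exists_lt_of_lt_ciSup ((div_lt_iff₀ hc).2 hlam)
  refine top_unique ((volume_restrict_Ioi_unpair_fst_eq_top n).symm.trans_le
    (measure_mono fun s (hs : _ = n) => ?_))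
  show lam < |spreadSeq c x s|
  rw [habs, hs]
  exact (div_lt_iff₀ hc).1 hn

lemma lorentzNormE_spreadSeq {phi : ℝ → ℝ} {x : ℕ → ℝ} (hx : BddAbove (range fun n => |x n|))
    {c : ℝ} (hc : 0 < c) :
    lorentzNormE phi (spreadSeq c x) =
      ENNReal.ofReal ((⨆ n, |x n|) * c) * ∫⁻ t in Ioi 0, ENNReal.ofReal (deriv phi t) := by
  rw [lorentzNormE, ← lintegral_const_mul' _ _ ENNReal.ofReal_ne_top]
  refine setLIntegral_congr_fun measurableSet_Ioi fun t _ => ?_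
  rw [rear_spreadSeq hx hc,
    ENNReal.ofReal_mul (mul_nonneg (Real.iSup_nonneg fun n => abs_nonneg _) hc.le)]

lemma hasLatticeCopyLinf_of_bddAbove {phi : ℝ → ℝ} (hconc : ConcaveOn ℝ (Ioi 0) phi)
    (hmono : StrictMonoOn phi (Ioi 0)) (h0 : Tendsto phi (𝓝[>] 0) (𝓝 0))
    (hbdd : BddAbove (phi '' Ioi 0)) : HasLatticeCopyLinf (lorentzMem phi) (lorentzNorm phi) := by
  set I := ∫⁻ t in Ioi 0, ENNReal.ofReal (deriv phi t)
  have hI_top : I ≠ ⊤ := (hconc.lintegral_Ioi_zero_deriv_lt_top hmono.monotoneOn h0 hbdd).ne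
  have hI_pos : 0 < I :=
    calc 0 < ENNReal.ofReal (phi 2 - phi 1) :=
          ENNReal.ofReal_pos.2 (sub_pos.2 (hmono (by norm_num : (1 : ℝ) ∈ Ioi 0)
            (by norm_num : (2 : ℝ) ∈ Ioi 0) one_lt_two))
      _ = ∫⁻ t in Ioc 1 2, ENNReal.ofReal (deriv phi t) :=
          (hconc.lintegral_Ioc_deriv_eq hmono.monotoneOn one_pos one_le_two).symm
      _ ≤ I := lintegral_mono_set fun t ht => one_pos.trans ht.1
  have hc : 0 < I.toReal⁻¹ := inv_pos.2 (ENNReal.toReal_pos hI_pos.ne' hI_top)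
  refine ⟨spreadSeq I.toReal⁻¹, fun x y => ?_, fun a x => ?_, fun x => ?_, fun x hx => ?_⟩
  · funext t; simp [spreadSeq, add_mul]
  · funext t; simp [spreadSeq, mul_assoc]
  · funext t; simp [spreadSeq, abs_mul, abs_of_pos hc]
  have hS : 0 ≤ ⨆ n, |x n| := Real.iSup_nonneg fun n => abs_nonneg _
  have hnorm : lorentzNormE phi (spreadSeq I.toReal⁻¹ x) = ENNReal.ofReal (⨆ n, |x n|) := by
    rw [lorentzNormE_spreadSeq hx hc]
    calc ENNReal.ofReal ((⨆ n, |x n|) * I.toReal⁻¹) * I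
        = ENNReal.ofReal ((⨆ n, |x n|) * I.toReal⁻¹) * ENNReal.ofReal I.toReal := by
          rw [ENNReal.ofReal_toReal hI_top]
      _ = ENNReal.ofReal (⨆ n, |x n|) := by
          rw [← ENNReal.ofReal_mul (mul_nonneg hS hc.le), inv_mul_cancel_right₀ (inv_pos.1 hc).ne']
  exact ⟨⟨(measurable_spreadSeq _ x).aemeasurable, hnorm ▸ ENNReal.ofReal_lt_top⟩,
    by rw [lorentzNorm, hnorm, ENNReal.toReal_ofReal hS]⟩

/-- Let `φ` be an increasing concave function on `(0,∞)` with `φ(0⁺) = 0`. The Lorentz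
space `Λ_φ` contains a lattice isometric copy of `ℓ∞` if and only if
`φ(∞) = lim_{t→∞} φ(t) < ∞` (i.e. `φ` is bounded on `(0,∞)`). -/
theorem lorentz_contains_linf_iff (phi : ℝ → ℝ)
    (hmono : StrictMonoOn phi (Set.Ioi (0 : ℝ)))
    (hconc : ConcaveOn ℝ (Set.Ioi (0 : ℝ)) phi)
    (h0 : Tendsto phi (𝓝[>] (0 : ℝ)) (𝓝 0)) :
    HasLatticeCopyLinf (lorentzMem phi) (lorentzNorm phi) ↔
      BddAbove (phi '' Set.Ioi (0 : ℝ)) :=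
  ⟨bddAbove_of_hasLatticeCopyLinf hconc hmono.monotoneOn,
    hasLatticeCopyLinf_of_bddAbove hconc hmono h0⟩
end

section
/- Let X be a Banach ideal space over a σ-finite measure space with the semi-Fatou property such that supp(X_a) = supp(X). If X contains a sequence {f_n} of norm-one elements with pairwise disjoint supports satisfying ‖Σ_{n=1}^∞ f_n‖_X = 1, then there exists f ∈ X with ‖f‖_X = dist(f, X_a) = 1. -/
open Filter Topology MeasureTheory Set

open BanachIdealSpace

/-- Let `X` be a Banach ideal space over a σ-finite measure space with the semi-Fatou
property such that `supp(X_a) = supp(X)`. If `X` contains a sequence `{fₙ}` of norm-one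
elements with pairwise disjoint supports satisfying `‖Σₙ fₙ‖_X = 1`, then there exists
`f ∈ X` with `‖f‖_X = dist (f, X_a) = 1`. -/
theorem exists_elt_with_dist_one {α : Type*} [MeasurableSpace α] {μ : Measure α}
    [SigmaFinite μ] (X : BanachIdealSpace α μ) (hsf : X.SemiFatou)
    (hsupp : ∀ A : Set α, MeasurableSet A → 0 < μ A →
      (∃ f, X.Mem f ∧ ¬ (∀ᵐ x ∂μ.restrict A, f x = 0)) →
      ∃ g ∈ X.oc, ¬ (∀ᵐ x ∂μ.restrict A, g x = 0))
    (f : ℕ → (α → ℝ)) (hmem : ∀ n, X.Mem (f n)) (hnorm : ∀ n, X.N (f n) = 1)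
    (hdisj : ∀ m n, m ≠ n → ∀ᵐ x ∂μ, f m x = 0 ∨ f n x = 0)
    (F : α → ℝ) (hF : X.Mem F) (hFsum : ∀ᵐ x ∂μ, HasSum (fun n => f n x) (F x))
    (hFnorm : X.N F = 1) :
    ∃ g : α → ℝ, X.Mem g ∧ X.N g = 1 ∧ distIn X.N g X.oc = 1 := by
  classical
  -- measurable versions of the `f n`
  set gm : ℕ → α → ℝ := fun n => (X.measurable (f n) (hmem n)).mk _ with hgm
  have hgmm : ∀ n, Measurable (gm n) := fun n => (X.measurable (f n) (hmem n)).measurable_mk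
  have hfg : ∀ n, f n =ᵐ[μ] gm n := fun n => (X.measurable (f n) (hmem n)).ae_eq_mk
  -- the tail support sets
  set Bset : ℕ → Set α := fun n => ⋃ k, {x | n ≤ k ∧ gm k x ≠ 0} with hBset
  have hBmeas : ∀ n, MeasurableSet (Bset n) := by
    intro n
    refine MeasurableSet.iUnion fun k => ?_
    have : {x | n ≤ k ∧ gm k x ≠ 0} = {x : α | n ≤ k} ∩ {x | gm k x ≠ 0} := by
      ext x; simp [Set.mem_setOf_eq, Set.mem_inter_iff]
    rw [this]
    exact (MeasurableSet.const _).inter ((hgmm k) (measurableSet_singleton 0)).compl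
  -- indicator functions
  set c : ℕ → α → ℝ := fun n => ({x | gm n x ≠ 0}).indicator (fun _ => (1:ℝ)) with hc
  have hcmeas : ∀ n, Measurable (c n) :=
    fun n => measurable_const.indicator ((hgmm n) (measurableSet_singleton 0)).compl
  have hc01 : ∀ n x, 0 ≤ c n x ∧ c n x ≤ 1 := by
    intro n x; by_cases hx : x ∈ {x | gm n x ≠ 0} <;> simp [hc, hx]
  set b : ℕ → α → ℝ := fun n => (Bset n).indicator (fun _ => (1:ℝ)) with hb
  have hbmeas : ∀ n, Measurable (b n) := fun n => measurable_const.indicator (hBmeas n)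
  have hb01 : ∀ n x, 0 ≤ b n x ∧ b n x ≤ 1 := by
    intro n x; by_cases hx : x ∈ Bset n <;> simp [hb, hx]
  have hcb : ∀ n x, c n x ≤ b n x := by
    intro n x
    by_cases hx : gm n x = 0
    · have : c n x = 0 := by simp [hc, hx]
      rw [this]; exact (hb01 n x).1
    · have hxB : x ∈ Bset n := Set.mem_iUnion.2 ⟨n, le_rfl, hx⟩
      have h1 : c n x = 1 := by simp [hc, hx]
      have h2 : b n x = 1 := by simp [hb, hxB]
      rw [h1, h2]
  have hBanti : ∀ n x, x ∈ Bset (n+1) → x ∈ Bset n := by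
    intro n x hx
    rcases Set.mem_iUnion.1 hx with ⟨k, hk1, hk2⟩
    exact Set.mem_iUnion.2 ⟨k, le_trans (Nat.le_succ n) hk1, hk2⟩
  -- 0 belongs to X.oc
  have h0oc : (0 : α → ℝ) ∈ X.oc := by
    refine ⟨X.mem_zero, fun u hu hub _ _ => ?_⟩
    have hz : ∀ n, X.N (u n) = 0 := by
      intro n
      have hle : ∀ᵐ x ∂μ, |u n x| ≤ |(0 : α → ℝ) x| := by
        filter_upwards [hub n] with x hx
        have : u n x = 0 := le_antisymm (by simpa using hx.2) hx.1
        simp [this]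
      have := (X.ideal (u n) 0 (X.measurable _ (hu n)) hle X.mem_zero).2
      have h0 : X.N (0 : α → ℝ) = 0 := X.N_zero
      exact le_antisymm (by rw [h0] at this; exact this) (X.N_nonneg _)
    exact tendsto_const_nhds.congr fun n => (hz n).symm
  -- the a.e. good set facts
  have hdisj' : ∀ᵐ x ∂μ, ∀ m n, m ≠ n → (f m x = 0 ∨ f n x = 0) := by
    rw [MeasureTheory.ae_all_iff]
    intro m
    rw [MeasureTheory.ae_all_iff]
    intro n
    by_cases hmn : m = n
    · filter_upwards with x hx; exact absurd hmn hx
    · filter_upwards [hdisj m n hmn] with x hx _; exact hx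
  have hfg' : ∀ᵐ x ∂μ, ∀ n, f n x = gm n x := by
    rw [MeasureTheory.ae_all_iff]; exact hfg
  -- key: for h in X.oc, 1 ≤ N (F - h)
  have key : ∀ h ∈ X.oc, 1 ≤ X.N (F - h) := by
    rintro h ⟨hhmem, hoc⟩
    have hhm : AEMeasurable h μ := X.measurable h hhmem
    set u : ℕ → α → ℝ := fun n x => |h x| * b n x with hu
    have humeas : ∀ n, AEMeasurable (u n) μ := fun n => (measurable_abs.comp_aemeasurable hhm).mul (hbmeas n).aemeasurable
    have hu_bound : ∀ n x, 0 ≤ u n x ∧ u n x ≤ |h x| := by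
      intro n x
      constructor
      · exact mul_nonneg (abs_nonneg _) (hb01 n x).1
      · calc |h x| * b n x ≤ |h x| * 1 := mul_le_mul_of_nonneg_left (hb01 n x).2 (abs_nonneg _)
          _ = |h x| := mul_one _
    have humem : ∀ n, X.Mem (u n) := by
      intro n
      refine (X.ideal (u n) h (humeas n) ?_ hhmem).1
      filter_upwards with x
      rw [abs_of_nonneg (hu_bound n x).1]; exact (hu_bound n x).2
    have huanti : ∀ n x, u (n+1) x ≤ u n x := by
      intro n x
      refine mul_le_mul_of_nonneg_left ?_ (abs_nonneg _)
      by_cases hx : x ∈ Bset (n+1)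
      · have hx' : x ∈ Bset n := hBanti n x hx
        simp [hb, hx, hx']
      · have : b (n+1) x = 0 := by simp [hb, hx]
        rw [this]; exact (hb01 n x).1
    have hu0 : ∀ᵐ x ∂μ, Tendsto (fun n => u n x) atTop (𝓝 0) := by
      filter_upwards [hdisj', hfg'] with x hdx hfgx
      by_cases hex : ∃ k, gm k x ≠ 0
      · obtain ⟨k₀, hk₀⟩ := hex
        have honly : ∀ k, k ≠ k₀ → gm k x = 0 := by
          intro k hk
          rcases hdx k k₀ hk with h1 | h2
          · rw [← hfgx k]; exact h1
          · exact absurd ((hfgx k₀).symm.trans h2) hk₀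
        have hev : ∀ n, k₀ + 1 ≤ n → u n x = 0 := by
          intro n hn
          have hxB : x ∉ Bset n := by
            intro hxB
            rcases Set.mem_iUnion.1 hxB with ⟨k, hk1, hk2⟩
            have : k ≠ k₀ := by omega
            exact hk2 (honly k this)
          simp [hu, hb, hxB]
        have : (fun n => u n x) =ᶠ[atTop] (fun _ => (0:ℝ)) :=
          Filter.eventually_atTop.2 ⟨k₀ + 1, hev⟩
        exact Tendsto.congr' this.symm tendsto_const_nhds
      · push_neg at hex
        have hev : ∀ n, u n x = 0 := by
          intro n
          have hxB : x ∉ Bset n := by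
            intro hxB
            rcases Set.mem_iUnion.1 hxB with ⟨k, _, hk2⟩
            exact hk2 (hex k)
          simp [hu, hb, hxB]
        exact Tendsto.congr (fun n => (hev n).symm) tendsto_const_nhds
    have hNu : Tendsto (fun n => X.N (u n)) atTop (𝓝 0) := by
      refine hoc u humem ?_ ?_ hu0
      · intro n; filter_upwards with x; exact hu_bound n x
      · intro n; filter_upwards with x; exact huanti n x
    -- the pieces
    have hFh : X.Mem (F - h) := by
      have := X.mem_add F ((-1:ℝ) • h) hF (X.mem_smul _ _ hhmem)
      have heq : F + (-1:ℝ) • h = F - h := by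
        funext x; simp [sub_eq_add_neg]
      rwa [heq] at this
    have hFhm : AEMeasurable (F - h) μ := X.measurable _ hFh
    -- for each n, 1 ≤ N (F - h) + N (u n)
    have hstep : ∀ n, 1 ≤ X.N (F - h) + X.N (u n) := by
      intro n
      set w : α → ℝ := fun x => F x * c n x with hw
      have hwmeas : AEMeasurable w μ := (X.measurable F hF).mul (hcmeas n).aemeasurable
      have hwfn : w =ᵐ[μ] f n := by
        filter_upwards [hdisj', hfg', hFsum] with x hdx hfgx hsx
        by_cases hx : gm n x = 0
        · have hcx : c n x = 0 := by simp [hc, hx]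
          have hfx : f n x = 0 := (hfgx n).trans hx
          simp [hw, hcx, hfx]
        · have hcx : c n x = 1 := by simp [hc, hx]
          have hfnx : f n x ≠ 0 := by rw [hfgx n]; exact hx
          have hzero : ∀ k, k ≠ n → f k x = 0 := by
            intro k hk
            rcases hdx k n hk with h1 | h2
            · exact h1
            · exact absurd h2 hfnx
          have hsx' : HasSum (fun k => f k x) (f n x) := hasSum_single n hzero
          have hFx : F x = f n x := hsx.unique hsx'
          simp [hw, hcx, hFx]
      have hwmem : X.Mem w := by
        refine (X.ideal w (f n) hwmeas ?_ (hmem n)).1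
        filter_upwards [hwfn] with x hx; rw [hx]
      have hwnorm : X.N w = 1 := by
        have h1 : X.N w ≤ X.N (f n) := by
          refine (X.ideal w (f n) hwmeas ?_ (hmem n)).2
          filter_upwards [hwfn] with x hx; rw [hx]
        have h2 : X.N (f n) ≤ X.N w := by
          refine (X.ideal (f n) w (X.measurable _ (hmem n)) ?_ hwmem).2
          filter_upwards [hwfn] with x hx; rw [hx]
        rw [← hnorm n]; exact le_antisymm h1 h2
      set p : α → ℝ := fun x => (F x - h x) * c n x with hp
      set q : α → ℝ := fun x => h x * c n x with hq
      have hpmeas : AEMeasurable p μ :=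
        ((X.measurable F hF).sub hhm).mul (hcmeas n).aemeasurable
      have hqmeas : AEMeasurable q μ := hhm.mul (hcmeas n).aemeasurable
      have hpmem : X.Mem p ∧ X.N p ≤ X.N (F - h) := by
        refine X.ideal p (F - h) hpmeas ?_ hFh
        filter_upwards with x
        have : |p x| = |F x - h x| * |c n x| := abs_mul _ _
        rw [this]
        have hcle : |c n x| ≤ 1 := by
          rw [abs_of_nonneg (hc01 n x).1]; exact (hc01 n x).2
        calc |F x - h x| * |c n x| ≤ |F x - h x| * 1 :=
              mul_le_mul_of_nonneg_left hcle (abs_nonneg _)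
          _ = |(F - h) x| := by simp
      have hqmem : X.Mem q ∧ X.N q ≤ X.N (u n) := by
        refine X.ideal q (u n) hqmeas ?_ (humem n)
        filter_upwards with x
        have h1 : |q x| = |h x| * |c n x| := abs_mul _ _
        rw [h1, abs_of_nonneg (hu_bound n x).1]
        rw [abs_of_nonneg (hc01 n x).1]
        exact mul_le_mul_of_nonneg_left (hcb n x) (abs_nonneg _)
      have hdecomp : w = p + q := by
        funext x; simp only [hw, hp, hq, Pi.add_apply]; ring
      have := X.N_add p q hpmem.1 hqmem.1
      rw [← hdecomp, hwnorm] at this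
      calc (1:ℝ) ≤ X.N p + X.N q := this
        _ ≤ X.N (F - h) + X.N (u n) := add_le_add hpmem.2 hqmem.2
    have hlim : Tendsto (fun n => X.N (F - h) + X.N (u n)) atTop (𝓝 (X.N (F - h))) := by
      have := (tendsto_const_nhds : Tendsto (fun _ : ℕ => X.N (F - h)) atTop (𝓝 (X.N (F - h)))).add hNu
      simpa using this
    exact ge_of_tendsto' hlim hstep
  -- conclude
  refine ⟨F, hF, hFnorm, ?_⟩
  unfold distIn
  have hmem1 : (1:ℝ) ∈ (fun g => X.N (F - g)) '' X.oc := by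
    refine ⟨0, h0oc, ?_⟩
    simp [hFnorm]
  have hlb : ∀ r ∈ (fun g => X.N (F - g)) '' X.oc, (1:ℝ) ≤ r := by
    rintro r ⟨h, hh, rfl⟩
    exact key h hh
  exact le_antisymm (csInf_le ⟨1, hlb⟩ hmem1) (le_csInf ⟨1, hmem1⟩ hlb)
end
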